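/- arXiv:2301.09308 — 5 statements merged into one kernel-verified Lean document; each statement's English description precedes it below -/
import Mathlib

section
/- Let G be a group acting on a set X and let Y be a subset of X. If a collection C of G-invariant functions from X to ℝ is universally approximating over Y, then C is also pairwise Y_G discriminating. -/
/-- Two points lie in the same `G`-orbit. -/
def SameOrbit (G : Type*) {X : Type*} [Group G] [MulAction G X] (x₁ x₂ : X) : Prop :=
  ∃ g : G, g • x₁ = x₂

/-- A function is `G`-invariant. -/
def GInvariant (G : Type*) {X : Type*} [Group G] [MulAction G X] (h : X → ℝ) : Prop :=
  ∀ (g : G) (x : X), h (g • x) = h x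

/-!
Points in different orbits are told apart by a `G`-invariant function of the orbit, e.g. the
indicator of the orbit of the first point. An element of `C` approximating such an `f` on `Y`
within half the gap `|f y₁ - f y₂|` cannot take equal values at the two points.
-/

open MulAction

section

variable {G X : Type*} [Group G] [MulAction G X]

theorem sameOrbit_iff_orbit_eq {x₁ x₂ : X} :
    SameOrbit G x₁ x₂ ↔ orbit G x₂ = orbit G x₁ :=
  mem_orbit_iff.symm.trans orbit_eq_iff.symm

theorem gInvariant_comp_orbit (φ : Set X → ℝ) : GInvariant G (φ ∘ orbit G) := by
  intro g x
  simp only [Function.comp_apply, orbit_smul]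

theorem exists_ne_of_approximating {Y : Set X} {C : Set (X → ℝ)}
    (hUniv : ∀ f : X → ℝ, GInvariant G f → ∀ ε > (0 : ℝ), ∃ h ∈ C, ∀ y ∈ Y, |f y - h y| < ε)
    {f : X → ℝ} (hf : GInvariant G f) {y₁ y₂ : X} (hy₁ : y₁ ∈ Y) (hy₂ : y₂ ∈ Y)
    (hne : f y₁ ≠ f y₂) : ∃ h ∈ C, h y₁ ≠ h y₂ := by
  have hgap : 0 < |f y₁ - f y₂| := abs_pos.mpr (sub_ne_zero.mpr hne)
  obtain ⟨h, hC, happrox⟩ := hUniv f hf (|f y₁ - f y₂| / 2) (half_pos hgap)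
  refine ⟨h, hC, fun heq => ?_⟩
  have h₁ := happrox y₁ hy₁
  have h₂ := happrox y₂ hy₂
  rw [heq] at h₁
  have := abs_sub_le (f y₁) (h y₂) (f y₂)
  rw [abs_sub_comm (h y₂)] at this
  linarith

end

theorem universally_approximating_implies_pairwise_discriminating_general
    {G X : Type*} [Group G] [MulAction G X] (Y : Set X) (C : Set (X → ℝ))
    (hUniv : ∀ f : X → ℝ, GInvariant G f →
      ∀ ε > (0 : ℝ), ∃ h ∈ C, ∀ y ∈ Y, |f y - h y| < ε) :
    ∀ y₁ ∈ Y, ∀ y₂ ∈ Y, ¬ SameOrbit G y₁ y₂ → ∃ h ∈ C, h y₁ ≠ h y₂ := by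
  intro y₁ hy₁ y₂ hy₂ hdistinct
  refine exists_ne_of_approximating hUniv
    (gInvariant_comp_orbit (({orbit G y₁} : Set (Set X)).indicator 1)) hy₁ hy₂ ?_
  have horbit : orbit G y₂ ∉ ({orbit G y₁} : Set (Set X)) :=
    fun h => hdistinct (sameOrbit_iff_orbit_eq.mpr h)
  simp only [Function.comp_apply, Set.indicator_of_mem (Set.mem_singleton _),
    Set.indicator_of_notMem horbit, Pi.one_apply]
  exact one_ne_zero

/-- If a collection `C` of `G`-invariant functions from `X` to `ℝ` is universally
approximating over `Y ⊆ X`, then `C` is pairwise `Y_G` discriminating. -/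
theorem universally_approximating_implies_pairwise_discriminating
    {G X : Type*} [Group G] [MulAction G X] (Y : Set X) (C : Set (X → ℝ))
    (hInv : ∀ h ∈ C, GInvariant G h)
    (hUniv : ∀ f : X → ℝ, GInvariant G f →
      ∀ ε > (0 : ℝ), ∃ h ∈ C, ∀ y ∈ Y, |f y - h y| < ε) :
    ∀ y₁ ∈ Y, ∀ y₂ ∈ Y, ¬ SameOrbit G y₁ y₂ → ∃ h ∈ C, h y₁ ≠ h y₂ :=
  universally_approximating_implies_pairwise_discriminating_general Y C hUniv
end

section
/- Let G be a group acting on a set X and let Y be a finite subset of X. If a collection C of G-invariant functions from X to ℝ is pairwise Y_G discriminating, then the class C^{+2} is universally approximating over Y. -/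
/-- `IsMLP L k M` says that `M : ℝ^k → ℝ` is a multilayer perceptron with `L` affine
layers whose hidden activations are the ReLU function applied componentwise. -/
def IsMLP : ℕ → (k : ℕ) → ((Fin k → ℝ) → ℝ) → Prop
  | 0, _, _ => False
  | 1, k, M => ∃ (w : Fin k → ℝ) (b : ℝ), M = fun x => (∑ i, w i * x i) + b
  | L + 2, k, M => ∃ (m : ℕ) (W : Matrix (Fin m) (Fin k) ℝ) (b : Fin m → ℝ)
      (M' : (Fin m → ℝ) → ℝ), IsMLP (L + 1) m M' ∧
        M = fun x => M' (fun i => max (W.mulVec x i + b i) 0)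

/-- The class `C^{+L}`: all functions of the form `x ↦ M (f₁ x, …, f_k x)` with
`k` finite, `f₁, …, f_k ∈ C`, and `M` an `L`-layer ReLU MLP. -/
def MLPClass {X : Type*} (L : ℕ) (C : Set (X → ℝ)) : Set (X → ℝ) :=
  { h | ∃ (k : ℕ) (f : Fin k → X → ℝ) (M : (Fin k → ℝ) → ℝ),
      (∀ i, f i ∈ C) ∧ IsMLP L k M ∧ ∀ x, h x = M (fun i => f i x) }

open Set

lemma Set.Finite.exists_fin_family_separating {X β : Type*} {Y : Set X} (hY : Y.Finite)
    {r : X → X → Prop} {C : Set (X → β)}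
    (hsep : ∀ y₁ ∈ Y, ∀ y₂ ∈ Y, ¬ r y₁ y₂ → ∃ h ∈ C, h y₁ ≠ h y₂) :
    ∃ (k : ℕ) (g : Fin k → X → β), (∀ i, g i ∈ C) ∧
      ∀ y₁ ∈ Y, ∀ y₂ ∈ Y, (∀ i, g i y₁ = g i y₂) → r y₁ y₂ := by
  set P := {p ∈ Y ×ˢ Y | ¬ r p.1 p.2}
  have : Finite P := ((hY.prod hY).subset (sep_subset _ _)).to_subtype
  choose h hhC hh using fun p : P => hsep p.1.1 p.2.1.1 p.1.2 p.2.1.2 p.2.2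
  obtain ⟨k, g, -, hg⟩ := (finite_range h).fin_param
  refine ⟨k, g, fun i => ?_, fun y₁ h₁ y₂ h₂ hg_eq => ?_⟩
  · obtain ⟨p, hp⟩ := hg ▸ mem_range_self i
    exact hp ▸ hhC p
  · by_contra hr
    obtain ⟨i, hi⟩ := hg.symm ▸ mem_range_self (f := h) ⟨(y₁, y₂), ⟨h₁, h₂⟩, hr⟩
    exact hh _ (hi ▸ hg_eq i)

lemma Module.exists_dual_injOn {K M : Type*} [Field K] [Infinite K] [AddCommGroup M]
    [Module K M] {S : Set M} (hS : S.Finite) : ∃ ℓ : Module.Dual K M, S.InjOn ℓ := by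
  have := hS.to_subtype
  obtain ⟨ℓ, hℓ⟩ := Module.exists_dual_forall_apply_ne_zero (K := K)
    (fun p : {p : S × S // (p.1 : M) ≠ p.2} => (p.1.1 : M) - p.1.2)
    fun p => sub_ne_zero.mpr p.2
  refine ⟨ℓ, fun x hx y hy hxy => ?_⟩
  by_contra hne
  exact hℓ ⟨(⟨x, hx⟩, ⟨y, hy⟩), hne⟩ (by simp [hxy])

lemma exists_dotProduct_injOn {K n : Type*} [Field K] [Infinite K] [Fintype n] [DecidableEq n]
    {S : Set (n → K)} (hS : S.Finite) : ∃ w : n → K, S.InjOn (w ⬝ᵥ ·) := by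
  obtain ⟨ℓ, hℓ⟩ := Module.exists_dual_injOn (K := K) hS
  have hℓw : dotProductEquiv K n ((dotProductEquiv K n).symm ℓ) = ℓ := by simp
  refine ⟨(dotProductEquiv K n).symm ℓ, fun x hx y hy hxy => hℓ hx hy ?_⟩
  rw [← hℓw]
  exact hxy

def reluSpan : Submodule ℝ (ℝ → ℝ) :=
  Submodule.span ℝ (range fun b z : ℝ => max (z + b) 0)

lemma relu_mem_reluSpan (b : ℝ) : (fun z : ℝ => max (z + b) 0) ∈ reluSpan :=
  Submodule.subset_span (mem_range_self b)

lemma exists_mem_reluSpan_hat (z₀ : ℝ) {δ : ℝ} (hδ : 0 < δ) :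
    ∃ φ ∈ reluSpan, φ z₀ = 1 ∧ ∀ z, δ ≤ |z - z₀| → φ z = 0 := by
  refine ⟨δ⁻¹ • ((fun z => max (z + (δ - z₀)) 0) - (2 : ℝ) • (fun z => max (z + -z₀) 0)
      + fun z => max (z + (-δ - z₀)) 0), ?_, ?_, fun z hz => ?_⟩
  · exact reluSpan.smul_mem _ <| reluSpan.add_mem
      (reluSpan.sub_mem (relu_mem_reluSpan _) (reluSpan.smul_mem _ (relu_mem_reluSpan _)))
      (relu_mem_reluSpan _)
  · simp only [Pi.smul_apply, Pi.add_apply, Pi.sub_apply, smul_eq_mul]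
    rw [max_eq_left (by linarith), max_eq_left (by linarith), max_eq_right (by linarith)]
    field_simp
    ring
  · simp only [Pi.smul_apply, Pi.add_apply, Pi.sub_apply, smul_eq_mul]
    rcases le_abs'.mp hz with hz | hz
    · rw [max_eq_right (by linarith), max_eq_right (by linarith), max_eq_right (by linarith)]
      ring
    · rw [max_eq_left (by linarith), max_eq_left (by linarith), max_eq_left (by linarith)]
      ring

lemma Set.Finite.exists_mem_reluSpan_indicator {Z : Set ℝ} (hZ : Z.Finite) (z₀ : ℝ) :
    ∃ φ ∈ reluSpan, φ z₀ = 1 ∧ ∀ z ∈ Z, z ≠ z₀ → φ z = 0 := by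
  have hopen : IsOpen (Z \ {z₀})ᶜ := hZ.sdiff.isClosed.isOpen_compl
  obtain ⟨δ, hδ, hball⟩ := Metric.isOpen_iff.mp hopen z₀ (by simp)
  obtain ⟨φ, hφ, hφ₀, hφ_far⟩ := exists_mem_reluSpan_hat z₀ hδ
  refine ⟨φ, hφ, hφ₀, fun z hz hne => hφ_far z ?_⟩
  by_contra! hlt
  exact hball (by rwa [Metric.mem_ball, Real.dist_eq]) ⟨hz, hne⟩

lemma Set.Finite.exists_mem_reluSpan_eqOn {Z : Set ℝ} (hZ : Z.Finite) (F : ℝ → ℝ) :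
    ∃ φ ∈ reluSpan, EqOn φ F Z := by
  classical
  choose ψ hψ hψ₀ hψ_ne using hZ.exists_mem_reluSpan_indicator
  refine ⟨∑ z ∈ hZ.toFinset, F z • ψ z,
    reluSpan.sum_mem fun z _ => reluSpan.smul_mem _ (hψ z), fun z' hz' => ?_⟩
  rw [Finset.sum_apply, Finset.sum_eq_single_of_mem z' (hZ.mem_toFinset.mpr hz')]
  · simp [hψ₀]
  · intro z hz hne
    simp [hψ_ne z z' hz' (Ne.symm hne)]

lemma Set.Finite.exists_mem_reluSpan_comp_eqOn {X : Type*} {Y : Set X} (hY : Y.Finite)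
    {t f : X → ℝ} (hf : ∀ y₁ ∈ Y, ∀ y₂ ∈ Y, t y₁ = t y₂ → f y₁ = f y₂) :
    ∃ φ ∈ reluSpan, ∀ y ∈ Y, φ (t y) = f y := by
  classical
  obtain ⟨φ, hφ, hφF⟩ := (hY.image t).exists_mem_reluSpan_eqOn
    fun z => if hz : ∃ y ∈ Y, t y = z then f hz.choose else 0
  refine ⟨φ, hφ, fun y hy => ?_⟩
  have hty : ∃ y' ∈ Y, t y' = t y := ⟨y, hy, rfl⟩
  rw [hφF (mem_image_of_mem t hy)]
  simp only [dif_pos hty]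
  exact hf _ hty.choose_spec.1 _ hy hty.choose_spec.2

lemma comp_dotProduct_mem_MLPClass_two {X : Type*} {C : Set (X → ℝ)} {k : ℕ}
    {g : Fin k → X → ℝ} (hg : ∀ i, g i ∈ C) (w : Fin k → ℝ) {φ : ℝ → ℝ} (hφ : φ ∈ reluSpan) :
    (fun x => φ (w ⬝ᵥ fun i => g i x)) ∈ MLPClass 2 C := by
  obtain ⟨m, u, ρ, rfl⟩ := Submodule.mem_span_set'.mp hφ
  choose b hb using fun j => (ρ j).2
  refine ⟨k, g, _, hg, ⟨m, Matrix.replicateRow (Fin m) w, b, _, ⟨u, 0, rfl⟩, rfl⟩, fun x => ?_⟩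
  simp [Matrix.replicateRow_mulVec_eq_const, ← hb]

theorem pairwise_discriminating_implies_plus_two_universally_approximating_general
    {G X : Type*} [Group G] [MulAction G X] (Y : Set X) (hY : Y.Finite)
    (C : Set (X → ℝ))
    (hDisc : ∀ y₁ ∈ Y, ∀ y₂ ∈ Y, ¬ SameOrbit G y₁ y₂ → ∃ h ∈ C, h y₁ ≠ h y₂) :
    ∀ f : X → ℝ, GInvariant G f →
      ∀ ε > (0 : ℝ), ∃ h ∈ MLPClass 2 C, ∀ y ∈ Y, |f y - h y| < ε := by
  intro f hf ε hε
  obtain ⟨k, g, hgC, hg⟩ := hY.exists_fin_family_separating hDisc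
  obtain ⟨w, hw⟩ := exists_dotProduct_injOn (hY.image fun y i => g i y)
  have hfactor : ∀ y₁ ∈ Y, ∀ y₂ ∈ Y,
      w ⬝ᵥ (fun i => g i y₁) = w ⬝ᵥ (fun i => g i y₂) → f y₁ = f y₂ := by
    intro y₁ h₁ y₂ h₂ heq
    obtain ⟨a, rfl⟩ := hg y₁ h₁ y₂ h₂
      (congrFun (hw (mem_image_of_mem _ h₁) (mem_image_of_mem _ h₂) heq))
    exact (hf a y₁).symm
  obtain ⟨φ, hφ, hφf⟩ := hY.exists_mem_reluSpan_comp_eqOn hfactor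
  exact ⟨_, comp_dotProduct_mem_MLPClass_two hgC w hφ, fun y hy => by simpa [hφf y hy] using hε⟩

/-- If a collection `C` of `G`-invariant functions from `X` to `ℝ` is pairwise `Y_G`
discriminating over a finite subset `Y ⊆ X`, then `C^{+2}` is universally
approximating over `Y`. -/
theorem pairwise_discriminating_implies_plus_two_universally_approximating
    {G X : Type*} [Group G] [MulAction G X] (Y : Set X) (hY : Y.Finite)
    (C : Set (X → ℝ))
    (hInv : ∀ h ∈ C, GInvariant G h)
    (hDisc : ∀ y₁ ∈ Y, ∀ y₂ ∈ Y, ¬ SameOrbit G y₁ y₂ → ∃ h ∈ C, h y₁ ≠ h y₂) :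
    ∀ f : X → ℝ, GInvariant G f →
      ∀ ε > (0 : ℝ), ∃ h ∈ MLPClass 2 C, ∀ y ∈ Y, |f y - h y| < ε :=
  pairwise_discriminating_implies_plus_two_universally_approximating_general Y hY C hDisc
end

section
/- Let (X, d) be a metric space, G a compact topological group acting continuously on X, and Y a compact subset of X. If a collection C of G-invariant functions from X to ℝ can universally approximate every continuous G-invariant function on Y, then C is pairwise Y_G discriminating. -/
lemma SameOrbit.symm {G X : Type*} [Group G] [MulAction G X] {x₁ x₂ : X}
    (h : SameOrbit G x₁ x₂) : SameOrbit G x₂ x₁ :=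
  let ⟨g, hg⟩ := h
  ⟨g⁻¹, by rw [← hg, inv_smul_smul]⟩

section OrbitInfDist

variable (G : Type*) {X : Type*} [Group G] [PseudoMetricSpace X] [MulAction G X]

noncomputable def orbitInfDist (y x : X) : ℝ :=
  ⨅ g : G, dist (g • x) y

lemma orbitInfDist_nonneg (y x : X) : 0 ≤ orbitInfDist G y x :=
  Real.iInf_nonneg fun _ => dist_nonneg

lemma orbitInfDist_le (y x : X) (g : G) : orbitInfDist G y x ≤ dist (g • x) y :=
  ciInf_le ⟨0, Set.forall_mem_range.2 fun _ => dist_nonneg⟩ g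

lemma orbitInfDist_self (y : X) : orbitInfDist G y y = 0 :=
  le_antisymm (by simpa using orbitInfDist_le G y y 1) (orbitInfDist_nonneg G y y)

lemma gInvariant_orbitInfDist (y : X) : GInvariant G (orbitInfDist G y) := by
  intro h x
  simp only [orbitInfDist, smul_smul]
  exact (Equiv.mulRight h).iInf_comp (g := fun g => dist (g • x) y)

variable [TopologicalSpace G] [CompactSpace G] [ContinuousSMul G X]

lemma continuous_orbitInfDist (y : X) : Continuous (orbitInfDist G y) := by
  have hcont : Continuous fun p : X × G => dist (p.2 • p.1) y :=
    (continuous_smul.comp continuous_swap).dist continuous_const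
  have := isCompact_univ.continuous_sInf (f := fun x g => dist (g • x) y) hcont
  simp only [Set.image_univ] at this
  exact this

end OrbitInfDist

lemma orbitInfDist_pos_of_not_sameOrbit (G : Type*) {X : Type*} [Group G] [MetricSpace X]
    [MulAction G X] [TopologicalSpace G] [CompactSpace G] [ContinuousSMul G X] {y x : X}
    (hxy : ¬ SameOrbit G x y) :
    0 < orbitInfDist G y x := by
  have hcont : Continuous fun g : G => dist (g • x) y :=
    (continuous_id.smul continuous_const).dist continuous_const
  obtain ⟨g₀, -, hmin⟩ := isCompact_univ.exists_isMinOn ⟨1, trivial⟩ hcont.continuousOn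
  have hg₀ : 0 < dist (g₀ • x) y := dist_pos.2 fun h => hxy ⟨g₀, h⟩
  exact hg₀.trans_le (le_ciInf fun g => hmin (Set.mem_univ g))

theorem continuous_universally_approximating_implies_pairwise_discriminating_general
    {G X : Type*} [Group G] [TopologicalSpace G] [CompactSpace G]
    [MetricSpace X] [MulAction G X] [ContinuousSMul G X]
    (Y : Set X) (C : Set (X → ℝ))
    (hUniv : ∀ f : X → ℝ, Continuous f → GInvariant G f →
      ∀ ε > (0 : ℝ), ∃ h ∈ C, ∀ y ∈ Y, |f y - h y| < ε) :
    ∀ y₁ ∈ Y, ∀ y₂ ∈ Y, ¬ SameOrbit G y₁ y₂ → ∃ h ∈ C, h y₁ ≠ h y₂ := by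
  intro y₁ hy₁ y₂ hy₂ hne
  set f := orbitInfDist G y₁
  have hf₁ : f y₁ = 0 := orbitInfDist_self G y₁
  have hf₂ : 0 < f y₂ := orbitInfDist_pos_of_not_sameOrbit G (mt SameOrbit.symm hne)
  obtain ⟨h, hC, hh⟩ := hUniv f (continuous_orbitInfDist G y₁) (gInvariant_orbitInfDist G y₁)
    (f y₂ / 2) (half_pos hf₂)
  refine ⟨h, hC, fun heq => ?_⟩
  have h₁ := hh y₁ hy₁
  have h₂ := hh y₂ hy₂
  rw [hf₁, heq] at h₁
  rw [abs_lt] at h₁ h₂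
  linarith [h₁.1, h₂.1]

/-- Let `X` be a metric space, `G` a compact topological group acting continuously on `X`,
and `Y` a compact subset of `X`.  If a collection `C` of `G`-invariant functions from `X`
to `ℝ` universally approximates every continuous `G`-invariant function on `Y`, then `C`
is pairwise `Y_G` discriminating. -/
theorem continuous_universally_approximating_implies_pairwise_discriminating
    {G X : Type*} [Group G] [TopologicalSpace G] [IsTopologicalGroup G] [CompactSpace G]
    [MetricSpace X] [MulAction G X] [ContinuousSMul G X]
    (Y : Set X) (hY : IsCompact Y) (C : Set (X → ℝ))
    (hInv : ∀ h ∈ C, GInvariant G h)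
    (hUniv : ∀ f : X → ℝ, Continuous f → GInvariant G f →
      ∀ ε > (0 : ℝ), ∃ h ∈ C, ∀ y ∈ Y, |f y - h y| < ε) :
    ∀ y₁ ∈ Y, ∀ y₂ ∈ Y, ¬ SameOrbit G y₁ y₂ → ∃ h ∈ C, h y₁ ≠ h y₂ :=
  continuous_universally_approximating_implies_pairwise_discriminating_general Y C hUniv
end

section
/- Let (X, d) be a metric space, G a compact topological group acting continuously on X, and Y a compact subset of X. If C is a collection of continuous G-invariant functions from X to ℝ that locates every orbit over Y, then the class C^{+2} universally approximates every continuous G-invariant function on Y: for every continuous G-invariant f : X → ℝ and every ε > 0 there exists h ∈ C^{+2} with sup_{y∈Y} |f(y) − h(y)| < ε. -/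
/-- The class `C` locates every orbit over `Y`: for every `y ∈ Y` and `ε > 0` there is
`δ_y ∈ C` nonnegative over `Y`, vanishing on the orbit of `y` within `Y`, and with a
threshold `r_y > 0` such that `δ_y y′ < r_y` forces `y′` to be `ε`-close to the orbit
of `y`. -/
def LocatesOrbits (G : Type*) {X : Type*} [Group G] [MulAction G X] [MetricSpace X]
    (C : Set (X → ℝ)) (Y : Set X) : Prop :=
  ∀ y ∈ Y, ∀ ε > (0 : ℝ), ∃ δ ∈ C,
    (∀ y' ∈ Y, 0 ≤ δ y') ∧
    (∀ y' ∈ Y, SameOrbit G y y' → δ y' = 0) ∧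
    ∃ r > (0 : ℝ), ∀ y' ∈ Y, δ y' < r → ∃ g : G, dist y' (g • y) < ε

open Set Topology

section ShallowNets

variable (E : Type*) [AddCommGroup E] [Module ℝ E]

/-- One-hidden-layer ReLU networks; constants need no separate output bias, being multiples of
the neuron of the constant affine map `1`. -/
def shallowReLUNets : Submodule ℝ (E → ℝ) :=
  Submodule.span ℝ (range fun φ : E →ᵃ[ℝ] ℝ => fun z => max (φ z) 0)

variable {E}

theorem relu_comp_mem_shallowReLUNets (φ : E →ᵃ[ℝ] ℝ) :
    (fun z => max (φ z) 0) ∈ shallowReLUNets E :=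
  Submodule.subset_span ⟨φ, rfl⟩

theorem const_mem_shallowReLUNets (c : ℝ) : (fun _ : E => c) ∈ shallowReLUNets E := by
  have h := Submodule.smul_mem _ c (relu_comp_mem_shallowReLUNets (AffineMap.const ℝ E (1 : ℝ)))
  convert h using 1
  ext z
  simp

theorem comp_mem_shallowReLUNets {F : Type*} [AddCommGroup F] [Module ℝ F] {P : F → ℝ}
    (hP : P ∈ shallowReLUNets F) (A : E →ᵃ[ℝ] F) : P ∘ A ∈ shallowReLUNets E := by
  suffices shallowReLUNets F ≤ (shallowReLUNets E).comap (LinearMap.funLeft ℝ ℝ A) from this hP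
  refine Submodule.span_le.mpr (range_subset_iff.mpr fun φ => ?_)
  exact relu_comp_mem_shallowReLUNets (φ.comp A)

theorem isMLP_two_of_mem_shallowReLUNets {k : ℕ} {M : (Fin k → ℝ) → ℝ}
    (hM : M ∈ shallowReLUNets (Fin k → ℝ)) : IsMLP 2 k M := by
  obtain ⟨m, c, g, rfl⟩ := Submodule.mem_span_set'.mp hM
  choose φ hφ using fun i => (g i).2
  refine ⟨m, Matrix.of fun i j => (φ i).linear fun j' => if j = j' then 1 else 0, fun i => φ i 0,
    fun v => ∑ i, c i * v i, ⟨c, 0, by simp⟩, funext fun z => ?_⟩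
  simp only [Finset.sum_apply, Pi.smul_apply, smul_eq_mul, ← hφ]
  congr! 3 with i
  rw [congrFun (φ i).decomp z, Pi.add_apply, (φ i).linear.pi_apply_eq_sum_univ z]
  simp [Matrix.mulVec, dotProduct, mul_comm]

end ShallowNets

section UniformApprox

variable {α : Type*}

def uniformApproxOn (S : Submodule ℝ (α → ℝ)) (K : Set α) : Submodule ℝ (α → ℝ) where
  carrier := {F | ∀ ε > 0, ∃ M ∈ S, ∀ z ∈ K, |F z - M z| < ε}
  zero_mem' ε hε := ⟨0, S.zero_mem, fun z _ => by simpa using hε⟩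
  add_mem' {F₁ F₂} h₁ h₂ ε hε := by
    obtain ⟨M₁, hM₁, h₁⟩ := h₁ (ε / 2) (half_pos hε)
    obtain ⟨M₂, hM₂, h₂⟩ := h₂ (ε / 2) (half_pos hε)
    refine ⟨M₁ + M₂, S.add_mem hM₁ hM₂, fun z hz => ?_⟩
    calc |(F₁ + F₂) z - (M₁ + M₂) z| = |(F₁ z - M₁ z) + (F₂ z - M₂ z)| := by
          simp only [Pi.add_apply]; ring_nf
      _ ≤ |F₁ z - M₁ z| + |F₂ z - M₂ z| := abs_add_le _ _
      _ < ε / 2 + ε / 2 := add_lt_add (h₁ z hz) (h₂ z hz)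
      _ = ε := add_halves ε
  smul_mem' c F h ε hε := by
    obtain ⟨M, hM, h⟩ := h (ε / (|c| + 1)) (by positivity)
    refine ⟨c • M, S.smul_mem c hM, fun z hz => ?_⟩
    calc |(c • F) z - (c • M) z| = |c| * |F z - M z| := by
          simp only [Pi.smul_apply, smul_eq_mul, ← mul_sub, abs_mul]
      _ ≤ (|c| + 1) * |F z - M z| := by gcongr; linarith
      _ < (|c| + 1) * (ε / (|c| + 1)) := by gcongr; exact h z hz
      _ = ε := mul_div_cancel₀ ε (by positivity)

theorem uniformApproxOn_le_of_le {S T : Submodule ℝ (α → ℝ)} {K : Set α}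
    (hTS : T ≤ uniformApproxOn S K) : uniformApproxOn T K ≤ uniformApproxOn S K := by
  intro F hF ε hε
  obtain ⟨N, hN, hFN⟩ := hF (ε / 2) (half_pos hε)
  obtain ⟨M, hM, hNM⟩ := hTS hN (ε / 2) (half_pos hε)
  refine ⟨M, hM, fun z hz => ?_⟩
  calc |F z - M z| ≤ |F z - N z| + |N z - M z| := abs_sub_le _ _ _
    _ < ε / 2 + ε / 2 := add_lt_add (hFN z hz) (hNM z hz)
    _ = ε := add_halves ε

theorem uniformApproxOn_anti {S : Submodule ℝ (α → ℝ)} {K L : Set α} (hKL : K ⊆ L) :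
    uniformApproxOn S L ≤ uniformApproxOn S K :=
  fun _ hF ε hε => (hF ε hε).imp fun _ ⟨hM, h⟩ => ⟨hM, fun z hz => h z (hKL hz)⟩

end UniformApprox

theorem comp_mem_uniformApproxOn {E F : Type*} [AddCommGroup E] [Module ℝ E] [AddCommGroup F]
    [Module ℝ F] {ψ : F → ℝ} {A : E →ᵃ[ℝ] F} {K : Set E}
    (hψ : ψ ∈ uniformApproxOn (shallowReLUNets F) (A '' K)) :
    ψ ∘ A ∈ uniformApproxOn (shallowReLUNets E) K := fun ε hε =>
  let ⟨M, hM, h⟩ := hψ ε hε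
  ⟨M ∘ A, comp_mem_shallowReLUNets hM A, fun z hz => h (A z) (mem_image_of_mem A hz)⟩

section Interpolation

/-- The piecewise linear interpolant of `φ` at the nodes `t 0 < ⋯ < t N`, constant outside
`[t 0, t N]`. -/
noncomputable def pwLinearInterp (φ : ℝ → ℝ) (t : ℕ → ℝ) : ℕ → ℝ → ℝ
  | 0 => fun _ => φ (t 0)
  | N + 1 => pwLinearInterp φ t N + ((φ (t (N + 1)) - φ (t N)) / (t (N + 1) - t N)) •
      ((fun x => max (x - t N) 0) - fun x => max (x - t (N + 1)) 0)

variable {φ : ℝ → ℝ} {t : ℕ → ℝ}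

theorem pwLinearInterp_mem_shallowReLUNets (N : ℕ) :
    pwLinearInterp φ t N ∈ shallowReLUNets ℝ := by
  have relu_sub_mem (s : ℝ) : (fun x : ℝ => max (x - s) 0) ∈ shallowReLUNets ℝ := by
    simpa using relu_comp_mem_shallowReLUNets (AffineMap.id ℝ ℝ - AffineMap.const ℝ ℝ s)
  induction N with
  | zero => exact const_mem_shallowReLUNets _
  | succ N ih =>
    exact Submodule.add_mem _ ih
      (Submodule.smul_mem _ _ (Submodule.sub_mem _ (relu_sub_mem _) (relu_sub_mem _)))

theorem pwLinearInterp_succ_apply_of_le {N : ℕ} {x : ℝ} (ht : Monotone t) (hx : x ≤ t N) :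
    pwLinearInterp φ t (N + 1) x = pwLinearInterp φ t N x := by
  have hx' : x ≤ t (N + 1) := hx.trans (ht N.le_succ)
  simp [pwLinearInterp, max_eq_right (sub_nonpos.mpr hx), max_eq_right (sub_nonpos.mpr hx')]

theorem pwLinearInterp_apply_of_node_le {N : ℕ} {x : ℝ} (ht : StrictMono t) (hx : t N ≤ x) :
    pwLinearInterp φ t N x = φ (t N) := by
  induction N with
  | zero => rfl
  | succ N ih =>
    have hN : t N < t (N + 1) := ht N.lt_succ_self
    rw [pwLinearInterp, Pi.add_apply, ih (hN.le.trans hx)]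
    simp only [Pi.smul_apply, Pi.sub_apply, smul_eq_mul]
    rw [max_eq_left (by linarith), max_eq_left (by linarith)]
    field_simp [sub_ne_zero.mpr hN.ne']
    ring

theorem abs_sub_pwLinearInterp_lt {N : ℕ} {η : ℝ} (hη : 0 < η) (ht : StrictMono t)
    (hosc : ∀ j < N, ∀ x ∈ Icc (t j) (t (j + 1)), ∀ x' ∈ Icc (t j) (t (j + 1)),
      |φ x - φ x'| < η) :
    ∀ x ∈ Icc (t 0) (t N), |φ x - pwLinearInterp φ t N x| < 2 * η := by
  induction N with
  | zero =>
    rintro x ⟨h₁, h₂⟩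
    simp [pwLinearInterp, le_antisymm h₂ h₁, hη]
  | succ N ih =>
    rintro x ⟨h₁, h₂⟩
    rcases le_total x (t N) with hxN | hNx
    · rw [pwLinearInterp_succ_apply_of_le ht.monotone hxN]
      exact ih (fun j hj => hosc j (hj.trans N.lt_succ_self)) x ⟨h₁, hxN⟩
    have htN : t N < t (N + 1) := ht N.lt_succ_self
    have hN : 0 < t (N + 1) - t N := sub_pos.mpr htN
    set θ := (x - t N) / (t (N + 1) - t N)
    have hθ : θ ≤ 1 := (div_le_one hN).mpr (by linarith)
    have hinterp : pwLinearInterp φ t (N + 1) x = φ (t N) + θ * (φ (t (N + 1)) - φ (t N)) := by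
      simp only [pwLinearInterp, Pi.add_apply, Pi.smul_apply, Pi.sub_apply, smul_eq_mul,
        pwLinearInterp_apply_of_node_le ht hNx, max_eq_left (sub_nonneg.mpr hNx),
        max_eq_right (sub_nonpos.mpr h₂), θ]
      ring
    have hcell : ∀ x ∈ Icc (t N) (t (N + 1)), |φ x - φ (t N)| < η := fun x hx =>
      hosc N N.lt_succ_self x hx (t N) (left_mem_Icc.mpr htN.le)
    calc |φ x - pwLinearInterp φ t (N + 1) x|
        = |(φ x - φ (t N)) - θ * (φ (t (N + 1)) - φ (t N))| := by rw [hinterp]; ring_nf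
      _ ≤ |φ x - φ (t N)| + |θ| * |φ (t (N + 1)) - φ (t N)| := by
          rw [← abs_mul]; exact abs_sub _ _
      _ ≤ |φ x - φ (t N)| + 1 * |φ (t (N + 1)) - φ (t N)| := by
          gcongr; exact abs_le.mpr ⟨by linarith [div_nonneg (sub_nonneg.mpr hNx) hN.le], hθ⟩
      _ < η + 1 * η := by
          gcongr
          · exact hcell x ⟨hNx, h₂⟩
          · exact hcell _ (right_mem_Icc.mpr htN.le)
      _ = 2 * η := by ring

end Interpolation

theorem mem_uniformApproxOn_shallowReLUNets_Icc {φ : ℝ → ℝ} {a b : ℝ} (hab : a < b)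
    (hφ : ContinuousOn φ (Icc a b)) : φ ∈ uniformApproxOn (shallowReLUNets ℝ) (Icc a b) := by
  intro ε hε
  obtain ⟨ρ, hρ, huc⟩ := Metric.uniformContinuousOn_iff.mp
    (isCompact_Icc.uniformContinuousOn_of_continuous hφ) (ε / 2) (half_pos hε)
  obtain ⟨N, hN⟩ := exists_nat_gt ((b - a) / ρ)
  have hN₀ : (0 : ℝ) < N := (div_pos (sub_pos.mpr hab) hρ).trans hN
  set h := (b - a) / N
  have hhρ : h < ρ := by
    rw [div_lt_iff₀ hN₀]; rwa [div_lt_iff₀ hρ, mul_comm] at hN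
  set t : ℕ → ℝ := fun j => a + j * h
  have ht : StrictMono t := fun i j hij => by
    have : (0 : ℝ) < h := div_pos (sub_pos.mpr hab) hN₀
    simp only [t]; gcongr
  have ht₀ : t 0 = a := by simp [t]
  have htN : t N = b := by simp only [t, h]; field_simp; ring
  have hcell : ∀ j < N, Icc (t j) (t (j + 1)) ⊆ Icc a b := fun j hj =>
    Icc_subset_Icc (ht₀ ▸ ht.monotone j.zero_le) (htN ▸ ht.monotone hj)
  have hosc : ∀ j < N, ∀ x ∈ Icc (t j) (t (j + 1)), ∀ x' ∈ Icc (t j) (t (j + 1)),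
      |φ x - φ x'| < ε / 2 := by
    intro j hj x hx x' hx'
    have hwidth : t (j + 1) - t j = h := by simp only [t]; push_cast; ring
    refine huc x (hcell j hj hx) x' (hcell j hj hx') ?_
    rw [Real.dist_eq, abs_lt]
    constructor <;> linarith [hx.1, hx.2, hx'.1, hx'.2]
  refine ⟨pwLinearInterp φ t N, pwLinearInterp_mem_shallowReLUNets N, fun x hx => ?_⟩
  have := abs_sub_pwLinearInterp_lt (half_pos hε) ht hosc x (by rwa [ht₀, htN])
  rwa [mul_div_cancel₀ ε two_ne_zero] at this

theorem mem_uniformApproxOn_shallowReLUNets_of_isCompact_real {φ : ℝ → ℝ} (hφ : Continuous φ)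
    {L : Set ℝ} (hL : IsCompact L) : φ ∈ uniformApproxOn (shallowReLUNets ℝ) L := by
  obtain ⟨R, hR, hLR⟩ := hL.isBounded.subset_closedBall_lt 0 0
  rw [Real.closedBall_eq_Icc] at hLR
  exact uniformApproxOn_anti hLR
    (mem_uniformApproxOn_shallowReLUNets_Icc (by linarith) hφ.continuousOn)

theorem mem_uniformApproxOn_span_exp_comp {E : Type*} [TopologicalSpace E] [AddCommGroup E]
    [Module ℝ E] [SeparatingDual ℝ E] {K : Set E} (hK : IsCompact K) {F : E → ℝ}
    (hF : ContinuousOn F K) :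
    F ∈ uniformApproxOn
      (Submodule.span ℝ (range fun ℓ : StrongDual ℝ E => fun z => Real.exp (ℓ z))) K := by
  have : CompactSpace K := isCompact_iff_compactSpace.mp hK
  let e : StrongDual ℝ E → C(K, ℝ) := fun ℓ => ⟨fun z => Real.exp (ℓ z), by fun_prop⟩
  let A := Algebra.adjoin ℝ (range e)
  have hA : Subalgebra.toSubmodule A = Submodule.span ℝ (range e) := by
    refine Algebra.adjoin_eq_span_of_subset ℝ fun g hg => Submodule.subset_span ?_
    induction hg using Submonoid.closure_induction with
    | mem g hg => exact hg
    | one => exact ⟨0, by ext; simp [e]⟩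
    | mul _ _ _ _ h₁ h₂ =>
      obtain ⟨ℓ₁, rfl⟩ := h₁
      obtain ⟨ℓ₂, rfl⟩ := h₂
      exact ⟨ℓ₁ + ℓ₂, by ext; simp [e, Real.exp_add]⟩
  have hsep : A.SeparatesPoints := by
    intro z₁ z₂ hz
    obtain ⟨ℓ, hℓ⟩ := SeparatingDual.exists_separating_of_ne (R := ℝ) (Subtype.coe_injective.ne hz)
    exact ⟨e ℓ, ⟨e ℓ, Algebra.subset_adjoin ⟨ℓ, rfl⟩, rfl⟩, fun h => hℓ (Real.exp_injective h)⟩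
  intro ε hε
  obtain ⟨g, hg⟩ := ContinuousMap.exists_mem_subalgebra_near_continuous_of_separatesPoints
    A hsep (K.domRestrict F) hF.domRestrict ε hε
  have hlift : ⇑(g : C(K, ℝ)) ∈ (Submodule.span ℝ (range fun ℓ : StrongDual ℝ E =>
      fun z => Real.exp (ℓ z))).map (LinearMap.funLeft ℝ ℝ ((↑) : K → E)) := by
    have := Submodule.mem_map_of_mem (f := ContinuousMap.coeFnLinearMap ℝ)
      (show (g : C(K, ℝ)) ∈ Submodule.span ℝ (range e) from hA ▸ g.2)
    rw [Submodule.map_span, ← range_comp] at this ⊢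
    exact this
  obtain ⟨G, hG, hGg⟩ := hlift
  refine ⟨G, hG, fun z hz => ?_⟩
  have := hg ⟨z, hz⟩
  rw [← congrFun hGg ⟨z, hz⟩, Real.norm_eq_abs, abs_sub_comm] at this
  exact this

theorem mem_uniformApproxOn_shallowReLUNets {E : Type*} [TopologicalSpace E] [AddCommGroup E]
    [Module ℝ E] [SeparatingDual ℝ E] {K : Set E} (hK : IsCompact K) {F : E → ℝ}
    (hF : ContinuousOn F K) : F ∈ uniformApproxOn (shallowReLUNets E) K := by
  refine uniformApproxOn_le_of_le (Submodule.span_le.mpr (range_subset_iff.mpr fun ℓ => ?_))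
    (mem_uniformApproxOn_span_exp_comp hK hF)
  exact comp_mem_uniformApproxOn (A := ℓ.toLinearMap.toAffineMap)
    (mem_uniformApproxOn_shallowReLUNets_of_isCompact_real Real.continuous_exp
      (hK.image ℓ.continuous))

theorem mem_mlpClass_two_of_mem_shallowReLUNets {X ι : Type*} [Fintype ι] {C : Set (X → ℝ)}
    {δ : ι → X → ℝ} (hδ : ∀ i, δ i ∈ C) {M : (ι → ℝ) → ℝ}
    (hM : M ∈ shallowReLUNets (ι → ℝ)) : (fun x => M fun i => δ i x) ∈ MLPClass 2 C := by
  let e := LinearMap.funLeft ℝ ℝ (Fintype.equivFin ι)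
  refine ⟨Fintype.card ι, fun j => δ ((Fintype.equivFin ι).symm j), M ∘ e, fun j => hδ _,
    isMLP_two_of_mem_shallowReLUNets (comp_mem_shallowReLUNets hM e.toAffineMap), fun x => ?_⟩
  refine congrArg M (funext fun i => ?_)
  simp [e, LinearMap.funLeft_apply]

section Orbits

variable {G X : Type*} [Group G] [TopologicalSpace G] [CompactSpace G] [MetricSpace X]
  [MulAction G X] [ContinuousSMul G X] {C : Set (X → ℝ)} {Y : Set X} {f : X → ℝ}

theorem LocatesOrbits.exists_majorant (hLoc : LocatesOrbits G C Y) (hY : IsCompact Y)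
    (hf : Continuous f) (hfInv : GInvariant G f) {η : ℝ} (hη : 0 < η) {y : X} (hy : y ∈ Y) :
    ∃ δ ∈ C, δ y = 0 ∧ ∃ c : ℝ, ∀ x ∈ Y, f x ≤ f y + η + c * δ x := by
  obtain ⟨x₀, -, hx₀⟩ := hY.exists_isMaxOn ⟨y, hy⟩ hf.continuousOn
  have hS : IsCompact (range (fun g : G => g • y) ∪ Y) :=
    (isCompact_range (continuous_id.smul continuous_const)).union hY
  obtain ⟨ρ, hρ, hρf⟩ := Metric.uniformContinuousOn_iff.mp
    (hS.uniformContinuousOn_of_continuous hf.continuousOn) η hη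
  obtain ⟨δ, hδC, hδ₀, hδy, r, hr, hδr⟩ := hLoc y hy ρ hρ
  have hc : 0 ≤ (f x₀ - f y) / r := div_nonneg (sub_nonneg.mpr (hx₀ hy)) hr.le
  refine ⟨δ, hδC, hδy y hy ⟨1, one_smul G y⟩, (f x₀ - f y) / r, fun x hx => ?_⟩
  rcases lt_or_ge (δ x) r with hlt | hge
  · obtain ⟨g, hg⟩ := hδr x hx hlt
    have hfx := hρf x (Or.inr hx) (g • y) (Or.inl ⟨g, rfl⟩) hg
    rw [Real.dist_eq, hfInv] at hfx
    nlinarith [le_abs_self (f x - f y), hδ₀ x hx]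
  · have : f x₀ - f y ≤ (f x₀ - f y) / r * δ x :=
      calc f x₀ - f y = (f x₀ - f y) / r * r := (div_mul_cancel₀ _ hr.ne').symm
        _ ≤ (f x₀ - f y) / r * δ x := by gcongr
    linarith [isMaxOn_iff.mp hx₀ x hx]

theorem LocatesOrbits.exists_envelope (hLoc : LocatesOrbits G C Y) (hY : IsCompact Y)
    (hCont : ∀ h ∈ C, Continuous h) (hf : Continuous f) (hfInv : GInvariant G f) {ε : ℝ}
    (hε : 0 < ε) : ∃ (t : Finset X) (δ : X → X → ℝ) (F : (t → ℝ) → ℝ),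
      (∀ y ∈ t, δ y ∈ C) ∧ Continuous F ∧ ∀ x ∈ Y, |f x - F fun y => δ y x| < ε := by
  choose! δ hδC hδy c hc using fun y (hy : y ∈ Y) =>
    hLoc.exists_majorant hY hf hfInv (half_pos hε) hy
  have hU : ∀ y ∈ Y, {x | f y + c y * δ y x < f x + ε / 2} ∈ 𝓝 y := fun y hy =>
    (isOpen_lt (continuous_const.add (continuous_const.mul (hCont _ (hδC y hy))))
      (hf.add continuous_const)).mem_nhds (by simp [hδy y hy, hε])
  obtain ⟨t, htY, hYt⟩ := hY.elim_nhds_subcover _ hU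
  rcases t.eq_empty_or_nonempty with rfl | htne
  · exact ⟨∅, δ, 0, by simp, continuous_const, fun x hx => by simpa using hYt hx⟩
  have hne : t.attach.Nonempty := Finset.attach_nonempty_iff.mpr htne
  set F : (t → ℝ) → ℝ := fun z => t.attach.inf' hne fun y => f y + ε / 2 + c y * z y
  refine ⟨t, δ, F, fun y hy => hδC y (htY y hy), ?_, fun x hx => ?_⟩
  · exact Continuous.finset_inf'_apply hne fun y _ =>
      continuous_const.add (continuous_const.mul (continuous_apply y))
  obtain ⟨y, hyt, hxy : f y + c y * δ y x < f x + ε / 2⟩ := mem_iUnion₂.mp (hYt hx)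
  have hlow : f x ≤ F fun y => δ y x := Finset.le_inf' _ _ fun y _ => hc y (htY y y.2) x hx
  have hup : F (fun y => δ y x) ≤ f y + ε / 2 + c y * δ y x :=
    Finset.inf'_le (fun y : t => f y + ε / 2 + c y * δ y x) (t.mem_attach ⟨y, hyt⟩)
  rw [abs_lt]
  constructor <;> linarith

end Orbits

theorem locates_orbits_implies_plus_two_universal_general
    {G X : Type*} [Group G] [TopologicalSpace G] [CompactSpace G]
    [MetricSpace X] [MulAction G X] [ContinuousSMul G X]
    (Y : Set X) (hY : IsCompact Y) (C : Set (X → ℝ))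
    (hCont : ∀ h ∈ C, Continuous h)
    (hLoc : LocatesOrbits G C Y) :
    ∀ f : X → ℝ, Continuous f → GInvariant G f →
      ∀ ε > (0 : ℝ), ∃ h ∈ MLPClass 2 C, ∀ y ∈ Y, |f y - h y| < ε := by
  intro f hf hfInv ε hε
  obtain ⟨t, δ, F, hδC, hF, hfF⟩ := hLoc.exists_envelope hY hCont hf hfInv (half_pos hε)
  have hΦ : Continuous fun x (y : t) => δ y x := continuous_pi fun y => hCont _ (hδC y y.2)
  obtain ⟨M, hM, hFM⟩ := mem_uniformApproxOn_shallowReLUNets (hY.image hΦ) hF.continuousOn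
    (ε / 2) (half_pos hε)
  refine ⟨_, mem_mlpClass_two_of_mem_shallowReLUNets (fun y : t => hδC y y.2) hM, fun x hx => ?_⟩
  calc |f x - M fun y => δ y x|
      ≤ |f x - F fun y => δ y x| + |(F fun y => δ y x) - M fun y => δ y x| := abs_sub_le _ _ _
    _ < ε / 2 + ε / 2 := add_lt_add (hfF x hx) (hFM _ (mem_image_of_mem _ hx))
    _ = ε := add_halves ε

/-- Let `X` be a metric space, `G` a compact topological group acting continuously on `X`,
and `Y` a compact subset of `X`.  If `C` is a collection of continuous `G`-invariant
functions that locates every orbit over `Y`, then `C^{+2}` universally approximates every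
continuous `G`-invariant function on `Y`. -/
theorem locates_orbits_implies_plus_two_universal
    {G X : Type*} [Group G] [TopologicalSpace G] [IsTopologicalGroup G] [CompactSpace G]
    [MetricSpace X] [MulAction G X] [ContinuousSMul G X]
    (Y : Set X) (hY : IsCompact Y) (C : Set (X → ℝ))
    (hCont : ∀ h ∈ C, Continuous h)
    (hInv : ∀ h ∈ C, GInvariant G h)
    (hLoc : LocatesOrbits G C Y) :
    ∀ f : X → ℝ, Continuous f → GInvariant G f →
      ∀ ε > (0 : ℝ), ∃ h ∈ MLPClass 2 C, ∀ y ∈ Y, |f y - h y| < ε :=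
  locates_orbits_implies_plus_two_universal_general Y hY C hCont hLoc
end

section
/- Let n ≥ d − 1 > 0 and let X be an n×d real matrix whose rows have pairwise distinct Euclidean norms and whose rows span a linear subspace of ℝ^d of dimension at least d − 1. If P is an n×n permutation matrix and Q ∈ SO(d) is a d×d special orthogonal matrix such that P X Qᵀ = X, then P = Iₙ and Q = I_d. In other words, the action of S_n × SO(d) on such matrices is free. -/
/-!
An orthogonal `Q` preserves row norms, so `‖X (σ i)‖ = ‖X i‖`, and the
distinct row norms force `σ = 1`. Then `Q` fixes the row space of `X`, of dimension at least
`d - 1`, so `N = Q - 1` has rank at most one, `N = x yᵀ`. By the matrix determinant lemma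
`det Q = 1 + yᵀx`, hence `yᵀx = 0` and `N² = 0`. Then `1 - N` is the inverse `Qᵀ` of `Q`, so `N`
is skew and `N Nᵀ = -N² = 0`, which forces `N = 0`.
-/

open scoped Matrix

/-- The Euclidean norm of row `i` of the matrix `X`. -/
noncomputable def rowNorm {n d : ℕ} (X : Matrix (Fin n) (Fin d) ℝ) (i : Fin n) : ℝ :=
  Real.sqrt (∑ k, X i k ^ 2)

namespace Matrix

variable {m n : Type*} [Fintype n]

lemma dotProduct_vecMul_transpose_self {R : Type*} [CommRing R] [DecidableEq n]
    {Q : Matrix n n R} (hQ : Qᵀ * Q = 1) (v : n → R) :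
    (v ᵥ* Qᵀ) ⬝ᵥ (v ᵥ* Qᵀ) = v ⬝ᵥ v := by
  rw [← dotProduct_mulVec, mulVec_transpose, vecMul_vecMul, hQ, vecMul_one]

lemma exists_eq_vecMulVec_of_rank_le_one {K : Type*} [Field K] [Fintype m]
    {M : Matrix m n K} (hM : M.rank ≤ 1) : ∃ x y, M = vecMulVec x y := by
  rw [rank_eq_finrank_span_cols, Submodule.finrank_le_one_iff_isPrincipal] at hM
  obtain ⟨x, hx⟩ := hM.principal
  have hcol (j : n) : ∃ c : K, c • x = M.col j :=
    Submodule.mem_span_singleton.mp (hx ▸ Submodule.subset_span ⟨j, rfl⟩)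
  choose y hy using hcol
  refine ⟨x, y, ext fun i j => ?_⟩
  simpa [vecMulVec_apply, mul_comm] using (congrFun (hy j) i).symm

lemma rank_sub_one_add_rank_le_card {K : Type*} [Field K] [Fintype m] [DecidableEq n]
    {X : Matrix m n K} {Q : Matrix n n K} (hXQ : X * Qᵀ = X) :
    (Q - 1).rank + X.rank ≤ Fintype.card n := by
  have hX : X * (Q - 1)ᵀ = 0 := by
    rw [transpose_sub, transpose_one, Matrix.mul_sub, hXQ, Matrix.mul_one, sub_self]
  rw [add_comm, ← rank_transpose (Q - 1)]
  exact rank_add_rank_le_card_of_mul_eq_zero hX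

lemma vecMulVec_mul_self_eq_zero {R : Type*} [CommRing R] [DecidableEq n] {x y : n → R}
    (hdet : (1 + vecMulVec x y).det = 1) : vecMulVec x y * vecMulVec x y = 0 := by
  rw [vecMulVec_eq Unit, det_one_add_replicateCol_mul_replicateRow, add_eq_left] at hdet
  rw [vecMulVec_mul_vecMulVec, hdet, zero_smul]
  ext
  simp [vecMulVec_apply]

lemma eq_one_of_mul_transpose_eq_one_of_sub_one_sq_eq_zero [DecidableEq n]
    {Q : Matrix n n ℝ} (hQ : Q * Qᵀ = 1) (hN : (Q - 1) * (Q - 1) = 0) : Q = 1 := by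
  set N := Q - 1 with hNdef
  have hQN : Q = 1 + N := by rw [hNdef]; abel
  have hinv : (1 - N) * Q = 1 := by
    rw [hQN]
    simp only [Matrix.sub_mul, Matrix.mul_add, Matrix.one_mul, Matrix.mul_one, hN]
    abel
  have hQt : Qᵀ = 1 - N :=
    calc Qᵀ = (1 - N) * Q * Qᵀ := by rw [hinv, Matrix.one_mul]
      _ = 1 - N := by rw [Matrix.mul_assoc, hQ, Matrix.mul_one]
  have hNt : Nᵀ = -N := by
    rw [hNdef, transpose_sub, hQt, transpose_one, hNdef]; abel
  have hNNt : N * Nᴴ = 0 := by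
    rw [conjTranspose_eq_transpose_of_trivial, hNt, Matrix.mul_neg, hN, neg_zero]
  rw [hQN, self_mul_conjTranspose_eq_zero.mp hNNt, add_zero]

end Matrix

lemma rowNorm_mul_transpose {n d : ℕ} {Q : Matrix (Fin d) (Fin d) ℝ} (hQ : Qᵀ * Q = 1)
    (X : Matrix (Fin n) (Fin d) ℝ) (i : Fin n) : rowNorm (X * Qᵀ) i = rowNorm X i := by
  have hsq (v : Fin d → ℝ) : ∑ k, v k ^ 2 = v ⬝ᵥ v := by simp [dotProduct, sq]
  rw [rowNorm, rowNorm, hsq, hsq, Matrix.mul_apply_eq_vecMul,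
    Matrix.dotProduct_vecMul_transpose_self hQ]

lemma rowNorm_permMatrix_mul {n d : ℕ} (σ : Equiv.Perm (Fin n))
    (X : Matrix (Fin n) (Fin d) ℝ) (i : Fin n) :
    rowNorm (σ.permMatrix ℝ * X) i = rowNorm X (σ i) := by
  rw [Equiv.Perm.permMatrix, PEquiv.toMatrix_toPEquiv_mul]
  rfl

theorem sn_so_action_free_general {n d : ℕ}
    (X : Matrix (Fin n) (Fin d) ℝ)
    (hnorm : ∀ i j : Fin n, i ≠ j → rowNorm X i ≠ rowNorm X j)
    (hrank : d - 1 ≤ X.rank)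
    (σ : Equiv.Perm (Fin n)) (Q : Matrix (Fin d) (Fin d) ℝ)
    (hQ : Q * Qᵀ = 1) (hdet : Q.det = 1)
    (hfix : σ.permMatrix ℝ * X * Qᵀ = X) :
    σ.permMatrix ℝ = 1 ∧ Q = 1 := by
  have hσ : σ = 1 := Equiv.ext fun i => by
    by_contra hi
    refine hnorm (σ i) i hi ?_
    calc rowNorm X (σ i) = rowNorm (σ.permMatrix ℝ * X) i :=
        (rowNorm_permMatrix_mul σ X i).symm
      _ = rowNorm (σ.permMatrix ℝ * X * Qᵀ) i :=
        (rowNorm_mul_transpose (mul_eq_one_comm.mp hQ) _ i).symm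
      _ = rowNorm X i := by rw [hfix]
  subst hσ
  have hXQ : X * Qᵀ = X := by simpa using hfix
  have hrank_le_one : (Q - 1).rank ≤ 1 := by
    have hcard := Matrix.rank_sub_one_add_rank_le_card hXQ
    rw [Fintype.card_fin] at hcard
    omega
  obtain ⟨x, y, hxy⟩ := Matrix.exists_eq_vecMulVec_of_rank_le_one hrank_le_one
  have hsq : (Q - 1) * (Q - 1) = 0 := by
    rw [hxy]
    apply Matrix.vecMulVec_mul_self_eq_zero
    rw [← hxy, add_sub_cancel, hdet]
  exact ⟨Matrix.permMatrix_one,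
    Matrix.eq_one_of_mul_transpose_eq_one_of_sub_one_sq_eq_zero hQ hsq⟩

/-- Let `n ≥ d − 1 > 0` and let `X` be an `n×d` real matrix whose rows have pairwise
distinct Euclidean norms and whose rows span a subspace of dimension at least `d − 1`
(i.e. `X` has rank at least `d − 1`).  If `P` is a permutation matrix and `Q ∈ SO(d)`
with `P X Qᵀ = X`, then `P = 1` and `Q = 1`: the action of `S_n × SO(d)` on such
matrices is free. -/
theorem sn_so_action_free {n d : ℕ} (hd : 0 < d - 1) (hnd : d - 1 ≤ n)
    (X : Matrix (Fin n) (Fin d) ℝ)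
    (hnorm : ∀ i j : Fin n, i ≠ j → rowNorm X i ≠ rowNorm X j)
    (hrank : d - 1 ≤ X.rank)
    (σ : Equiv.Perm (Fin n)) (Q : Matrix (Fin d) (Fin d) ℝ)
    (hQ : Q * Qᵀ = 1) (hdet : Q.det = 1)
    (hfix : σ.permMatrix ℝ * X * Qᵀ = X) :
    σ.permMatrix ℝ = 1 ∧ Q = 1 :=
  sn_so_action_free_general X hnorm hrank σ Q hQ hdet hfix
end
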